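/- Let a, b ∈ ℝ with 0 < b − a ≤ π, let m ≥ 1, and for k = 1, …, m let z_k = r_k·exp(i·θ_k) be complex numbers with r_k > 0 and θ_k ∈ (a, b). Then the sum Σ_{k=1}^{m} z_k is nonzero and can be written as R·exp(i·φ) with R > 0 and min_k θ_k ≤ φ ≤ max_k θ_k; in particular φ ∈ (a, b). -/

import Mathlib

open Real

/-! Rotating the sum by the midpoint `c` of `[min θ, max θ]` puts every summand in the open right
half-plane, since `|θ_k - c| < π / 2`; so the rotated sum has positive real part, is nonzero, and its
argument lies in `(-π/2, π/2)`, which gives `φ ∈ (c - π/2, c + π/2)`. Rotating instead by `min θ`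
(resp. `max θ`) makes every summand lie in the closed upper (resp. lower) half-plane, so
`sin (φ - min θ) ≥ 0 ≥ sin (φ - max θ)`, and on the window available for `φ` this pins
`min θ ≤ φ ≤ max θ`. -/

lemma Real.nonneg_of_sin_nonneg {x : ℝ} (hx : -π < x) (h : 0 ≤ Real.sin x) : 0 ≤ x :=
  not_lt.mp fun hneg => (Real.sin_neg_of_neg_of_neg_pi_lt hneg hx).not_ge h

namespace Complex

lemma exp_neg_mul_I_mul_ofReal_mul_exp (r θ t : ℝ) :
    exp (-(t * I)) * (r * exp (θ * I)) = r * exp (↑(θ - t) * I) := by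
  rw [mul_left_comm, ← exp_add]
  push_cast
  ring_nf

lemma re_ofReal_mul_exp_mul_I (r θ : ℝ) : ((r : ℂ) * exp (θ * I)).re = r * Real.cos θ := by
  rw [re_ofReal_mul, exp_ofReal_mul_I_re]

lemma im_ofReal_mul_exp_mul_I (r θ : ℝ) : ((r : ℂ) * exp (θ * I)).im = r * Real.sin θ := by
  rw [im_ofReal_mul, exp_ofReal_mul_I_im]

lemma exists_eq_norm_mul_exp_of_re_pos {w : ℂ} {c : ℝ} (h : 0 < (exp (-(c * I)) * w).re) :
    ∃ φ ∈ Set.Ioo (c - π / 2) (c + π / 2), w = ‖w‖ * exp (φ * I) := by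
  set u := exp (-(c * I)) * w
  have hψ : |arg u| < π / 2 := abs_arg_lt_pi_div_two_iff.mpr (Or.inl h)
  have hnorm : ‖u‖ = ‖w‖ := by simp [u, norm_exp]
  have hw : w = exp (c * I) * u := by simp [u, ← mul_assoc, ← exp_add]
  refine ⟨c + arg u, ⟨by linarith [neg_abs_le (arg u)], by linarith [le_abs_self (arg u)]⟩, ?_⟩
  conv_lhs => rw [hw, ← norm_mul_exp_arg_mul_I u, hnorm, mul_left_comm, ← exp_add]
  push_cast
  ring_nf

section WeightedSum

variable {ι : Type*} (s : Finset ι) (r θ : ι → ℝ)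

lemma exp_neg_mul_I_mul_sum (t : ℝ) :
    exp (-(t * I)) * ∑ k ∈ s, (r k : ℂ) * exp (θ k * I) =
      ∑ k ∈ s, (r k : ℂ) * exp (↑(θ k - t) * I) := by
  simp only [Finset.mul_sum, exp_neg_mul_I_mul_ofReal_mul_exp]

lemma re_exp_neg_mul_I_mul_sum (t : ℝ) :
    (exp (-(t * I)) * ∑ k ∈ s, (r k : ℂ) * exp (θ k * I)).re =
      ∑ k ∈ s, r k * Real.cos (θ k - t) := by
  simp only [exp_neg_mul_I_mul_sum, re_sum, re_ofReal_mul_exp_mul_I]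

lemma im_exp_neg_mul_I_mul_sum (t : ℝ) :
    (exp (-(t * I)) * ∑ k ∈ s, (r k : ℂ) * exp (θ k * I)).im =
      ∑ k ∈ s, r k * Real.sin (θ k - t) := by
  simp only [exp_neg_mul_I_mul_sum, im_sum, im_ofReal_mul_exp_mul_I]

end WeightedSum

variable {ι : Type*} {s : Finset ι} {r θ : ι → ℝ} {lo hi : ℝ}

theorem sum_ne_zero_and_eq_norm_mul_exp_of_mem_Icc (hs : s.Nonempty) (hr : ∀ k ∈ s, 0 < r k)
    (hθ : ∀ k ∈ s, θ k ∈ Set.Icc lo hi) (hwidth : hi - lo < π) :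
    ∑ k ∈ s, (r k : ℂ) * exp (θ k * I) ≠ 0 ∧ ∃ φ ∈ Set.Icc lo hi,
      ∑ k ∈ s, (r k : ℂ) * exp (θ k * I) = ‖∑ k ∈ s, (r k : ℂ) * exp (θ k * I)‖ * exp (φ * I) := by
  set S := ∑ k ∈ s, (r k : ℂ) * exp (θ k * I)
  set c := (lo + hi) / 2 with hc
  have hre : 0 < (exp (-(c * I)) * S).re := by
    rw [re_exp_neg_mul_I_mul_sum]
    refine Finset.sum_pos (fun k hk => mul_pos (hr k hk) (Real.cos_pos_of_mem_Ioo ?_)) hs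
    obtain ⟨h1, h2⟩ := hθ k hk
    constructor <;> linarith [hc]
  have hS : S ≠ 0 := by
    rintro h
    simp [h] at hre
  obtain ⟨φ, ⟨hφlo, hφhi⟩, hpolar⟩ := exists_eq_norm_mul_exp_of_re_pos hre
  set R := ‖S‖
  have hR : 0 < R := norm_pos_iff.mpr hS
  have him (t : ℝ) : (exp (-(t * I)) * S).im = R * Real.sin (φ - t) := by
    rw [hpolar, exp_neg_mul_I_mul_ofReal_mul_exp, im_ofReal_mul_exp_mul_I]
  have hsin_lo : 0 ≤ Real.sin (φ - lo) := by
    refine nonneg_of_mul_nonneg_right ?_ hR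
    rw [← him, im_exp_neg_mul_I_mul_sum]
    refine Finset.sum_nonneg fun k hk => mul_nonneg (hr k hk).le ?_
    obtain ⟨h1, h2⟩ := hθ k hk
    exact Real.sin_nonneg_of_nonneg_of_le_pi (by linarith) (by linarith)
  have hsin_hi : 0 ≤ Real.sin (hi - φ) := by
    refine nonneg_of_mul_nonneg_right ?_ hR
    rw [← neg_sub, Real.sin_neg, mul_neg, neg_nonneg, ← him, im_exp_neg_mul_I_mul_sum]
    refine Finset.sum_nonpos fun k hk => mul_nonpos_of_nonneg_of_nonpos (hr k hk).le ?_
    obtain ⟨h1, h2⟩ := hθ k hk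
    exact Real.sin_nonpos_of_nonpos_of_neg_pi_le (by linarith) (by linarith)
  obtain ⟨k₀, hk₀⟩ := hs
  have hle : lo ≤ hi := (hθ k₀ hk₀).1.trans (hθ k₀ hk₀).2
  refine ⟨hS, φ, ⟨?_, ?_⟩, hpolar⟩
  · linarith [Real.nonneg_of_sin_nonneg (by linarith) hsin_lo]
  · linarith [Real.nonneg_of_sin_nonneg (by linarith) hsin_hi]

end Complex

theorem stmt_18 (a b : ℝ) (hab1 : b - a ≤ π)
    (m : ℕ) (hm : 1 ≤ m) (z : Fin m → ℂ) (r θ : Fin m → ℝ)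
    (hr : ∀ k, 0 < r k) (hθa : ∀ k, a < θ k) (hθb : ∀ k, θ k < b)
    (hz : ∀ k, z k = (r k : ℂ) * Complex.exp (Complex.I * (θ k : ℂ))) :
    (∑ k, z k) ≠ 0 ∧
      ∃ R φ : ℝ, 0 < R ∧
        Finset.univ.inf' ⟨⟨0, by omega⟩, Finset.mem_univ _⟩ θ ≤ φ ∧
        φ ≤ Finset.univ.sup' ⟨⟨0, by omega⟩, Finset.mem_univ _⟩ θ ∧
        a < φ ∧ φ < b ∧
        (∑ k, z k) = (R : ℂ) * Complex.exp (Complex.I * (φ : ℂ)) := by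
  have hne : (Finset.univ : Finset (Fin m)).Nonempty := ⟨⟨0, by omega⟩, Finset.mem_univ _⟩
  obtain ⟨kmin, -, hkmin⟩ := Finset.exists_mem_eq_inf' hne θ
  obtain ⟨kmax, -, hkmax⟩ := Finset.exists_mem_eq_sup' hne θ
  have hθ : ∀ k ∈ Finset.univ, θ k ∈ Set.Icc (Finset.univ.inf' hne θ) (Finset.univ.sup' hne θ) :=
    fun k hk => ⟨Finset.inf'_le θ hk, Finset.le_sup' θ hk⟩
  have hwidth : Finset.univ.sup' hne θ - Finset.univ.inf' hne θ < π := by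
    linarith [hθa kmin, hθb kmax]
  have hsum : ∑ k, z k = ∑ k, (r k : ℂ) * Complex.exp (θ k * Complex.I) := by
    simp only [hz, mul_comm Complex.I]
  obtain ⟨hS, φ, ⟨hφmin, hφmax⟩, hpolar⟩ :=
    Complex.sum_ne_zero_and_eq_norm_mul_exp_of_mem_Icc hne (fun k _ => hr k) hθ hwidth
  refine ⟨hsum ▸ hS, ‖∑ k, (r k : ℂ) * Complex.exp (θ k * Complex.I)‖, φ, norm_pos_iff.mpr hS,
    hφmin, hφmax, by linarith [hθa kmin], by linarith [hθb kmax], ?_⟩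
  rw [hsum, mul_comm Complex.I]
  exact hpolar
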